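/- If π satisfies b(π;p) = 0 for distributions p_X, p_A, p_T with strictly positive p_X and p_A, and with p_T strictly positive on a generating set G of the symmetric group S_K, then π is AP-symmetric with respect to the full group S_K. -/

import Mathlib

/-!
All summands of the bias are nonnegative, so its vanishing forces `π (σ • a) x = π a x` whenever
`pX x * pA a * pT σ > 0`, in particular for every `σ ∈ G`. The permutations under which `π` is
invariant form a subgroup, which therefore contains the closure of `G`, the whole symmetric group.
-/

open Finset

theorem eq_of_sum_mul_abs_sub_eq_zero {ι : Type*} [Fintype ι] {w u v : ι → ℝ}
    (hw : ∀ i, 0 ≤ w i) (h : ∑ i, w i * |u i - v i| = 0) {i : ι} (hi : 0 < w i) :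
    u i = v i := by
  have hterm : w i * |u i - v i| = 0 :=
    (sum_eq_zero_iff_of_nonneg fun j _ ↦ mul_nonneg (hw j) (abs_nonneg _)).mp h i (mem_univ i)
  rw [mul_eq_zero, abs_eq_zero, sub_eq_zero] at hterm
  exact hterm.resolve_left hi.ne'

theorem MulAction.comp_smul_eq_of_mem_closure {G A B : Type*} [Group G] [MulAction G A]
    {s : Set G} {f : A → B} (h : ∀ g ∈ s, ∀ a, f (g • a) = f a) {g : G}
    (hg : g ∈ Subgroup.closure s) (a : A) : f (g • a) = f a := by
  induction hg using Subgroup.closure_induction generalizing a with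
  | mem g hg => exact h g hg a
  | one => rw [one_smul]
  | mul g g' _ _ hg hg' => rw [mul_smul, hg, hg']
  | inv g _ hg => rw [← hg, smul_inv_smul]

/-- If the order bias vanishes for distributions with pX, pA strictly positive
and pT nonnegative and strictly positive on a generating set G of the
symmetric group, then the policy is AP-symmetric with respect to the full
symmetric group. -/
theorem stmt17 {X S : Type*} [Fintype X] [Fintype S] {K : ℕ}
    (π : (Fin K → S) → X → ℝ)
    (G : Set (Equiv.Perm (Fin K))) (hG : Subgroup.closure G = ⊤)
    (pX : X → ℝ) (pA : (Fin K → S) → ℝ) (pT : Equiv.Perm (Fin K) → ℝ)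
    (hpX : ∀ x, 0 < pX x) (hpA : ∀ a, 0 < pA a)
    (hpT0 : ∀ σ, 0 ≤ pT σ) (hpTG : ∀ σ ∈ G, 0 < pT σ)
    (hb : ∑ x : X, ∑ a : Fin K → S, ∑ σ : Equiv.Perm (Fin K),
      pX x * pA a * pT σ * |π a x - π (a ∘ ⇑σ⁻¹) x| = 0) :
    ∀ (a : Fin K → S) (x : X) (σ : Equiv.Perm (Fin K)), π a x = π (a ∘ ⇑σ⁻¹) x := by
  simp only [← Fintype.sum_prod_type'] at hb
  have hgen : ∀ σ ∈ G, ∀ a x, π a x = π (a ∘ ⇑σ⁻¹) x := fun σ hσ a x ↦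
    eq_of_sum_mul_abs_sub_eq_zero (i := (x, a, σ))
      (fun _ ↦ mul_nonneg (mul_nonneg (hpX _).le (hpA _).le) (hpT0 _)) hb
      (mul_pos (mul_pos (hpX x) (hpA a)) (hpTG σ hσ))
  -- `σ • a = a ∘ σ⁻¹` under the action of `Perm (Fin K)` on `Fin K → S` by reindexing.
  let : MulAction (Equiv.Perm (Fin K)) (Fin K → S) := arrowAction
  intro a x σ
  have hσ : σ ∈ Subgroup.closure G := hG ▸ Subgroup.mem_top σ
  exact congrFun (MulAction.comp_smul_eq_of_mem_closure
    (fun τ hτ a ↦ funext fun x ↦ (hgen τ hτ a x).symm) hσ a).symm x
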